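/- For infinitely many natural numbers n, p_{n+1}^{1/(n+1)} / p_n^{1/n} < (log(n+1) + p_{n+1}^{-1 + 1/(n+1)}) / log n. -/

import Mathlib

/-!
With `r n = log n / p_n ^ (1/n)`, the inequality at `n` follows from
`r n < r (n+1) + 1/p_{n+1}`. If this failed for all large `n`, then `1/p_{n+1} ≤ r n - r (n+1)`
would telescope, and since `r ≥ 0` the partial sums of `∑ 1/p_n` would stay bounded,
contradicting the divergence of the sum of the reciprocals of the primes.
-/

/-- `p n` is the `n`-th prime number (1-indexed), as a real number. -/
noncomputable def p (n : ℕ) : ℝ := Nat.nth Nat.Prime (n - 1)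

open Finset

theorem Nat.not_summable_one_div_nth_prime :
    ¬ Summable (fun n : ℕ => (1 : ℝ) / Nat.nth Nat.Prime n) := by
  have := Nat.infinite_setOfPred_prime.to_subtype
  rw [Nat.nth_eq_orderIsoOfNat Nat.infinite_setOfPred_prime]
  exact ((Nat.Subtype.orderIsoOfNat {q : ℕ | q.Prime}).toEquiv.summable_iff
    (f := fun q : {q : ℕ | q.Prime} => (1 : ℝ) / (q : ℕ))).not.mpr
    (summable_subtype_iff_indicator.not.mpr not_summable_one_div_on_primes)

theorem p_pos (n : ℕ) : 0 < p n := by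
  unfold p
  exact_mod_cast (Nat.prime_nth_prime (n - 1)).pos

theorem not_summable_one_div_p : ¬ Summable (fun n => 1 / p n) := by
  rw [← summable_nat_add_iff 1]
  simpa [p] using Nat.not_summable_one_div_nth_prime

theorem infinite_setOf_lt_add_of_not_summable {r a : ℕ → ℝ} (hr : ∀ n, 0 ≤ r n)
    (ha₀ : ∀ n, 0 ≤ a n) (ha : ¬ Summable a) : {n | r n < r (n + 1) + a (n + 1)}.Infinite := by
  intro hfin
  obtain ⟨M, hM⟩ := hfin.bddAbove
  have hstep (i : ℕ) : a (i + (M + 2)) ≤ r (M + 1 + i) - r (M + 1 + i + 1) := by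
    have : M + 1 + i ∉ {n | r n < r (n + 1) + a (n + 1)} := fun h => by have := hM h; omega
    simp only [Set.mem_ofPred_eq, not_lt] at this
    rw [show i + (M + 2) = M + 1 + i + 1 by omega]
    linarith
  refine ha ((summable_nat_add_iff (M + 2)).mp (summable_of_sum_range_le (c := r (M + 1))
    (fun i => ha₀ _) fun k => ?_))
  calc ∑ i ∈ range k, a (i + (M + 2))
      ≤ ∑ i ∈ range k, (r (M + 1 + i) - r (M + 1 + i + 1)) := sum_le_sum fun i _ => hstep i
    _ = r (M + 1) - r (M + 1 + k) := sum_range_sub' (fun i => r (M + 1 + i)) k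
    _ ≤ r (M + 1) := sub_le_self _ (hr _)

-- The paper's `q_n / p_n`, where `q_n = p_n ^ (1 - 1/n) * log n`.
noncomputable def logDivRoot (n : ℕ) : ℝ := Real.log n / p n ^ ((1 : ℝ) / n)

theorem logDivRoot_nonneg (n : ℕ) : 0 ≤ logDivRoot n :=
  div_nonneg (Real.log_natCast_nonneg n) (Real.rpow_nonneg (p_pos n).le _)

theorem firoozbakht_inequality_of_logDivRoot_lt {n : ℕ} (hn : 2 ≤ n)
    (h : logDivRoot n < logDivRoot (n + 1) + 1 / p (n + 1)) :
    p (n + 1) ^ ((1 : ℝ) / (n + 1)) / p n ^ ((1 : ℝ) / n) <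
      (Real.log (n + 1) + p (n + 1) ^ (-1 + (1 : ℝ) / (n + 1))) / Real.log n := by
  set u := p n ^ ((1 : ℝ) / n)
  set v := p (n + 1) ^ ((1 : ℝ) / (n + 1))
  have hu : 0 < u := Real.rpow_pos_of_pos (p_pos n) _
  have hv : 0 < v := Real.rpow_pos_of_pos (p_pos _) _
  have hlog : 0 < Real.log n := Real.log_pos (by exact_mod_cast hn)
  have hpow : p (n + 1) ^ (-1 + (1 : ℝ) / (n + 1)) = v / p (n + 1) := by
    rw [Real.rpow_add (p_pos _), Real.rpow_neg_one, inv_mul_eq_div]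
  have h' : Real.log n / u < (Real.log (n + 1) + v / p (n + 1)) / v := by
    unfold logDivRoot at h
    push_cast at h
    rw [add_div, div_div_cancel_left' hv.ne', ← one_div]
    exact h
  rw [hpow, div_lt_div_iff₀ hu hlog]
  rw [div_lt_div_iff₀ hu hv] at h'
  linarith

theorem firoozbakht_type_inequality :
    {n : ℕ | p (n + 1) ^ ((1 : ℝ) / (n + 1)) / p n ^ ((1 : ℝ) / n) <
      (Real.log (n + 1) + p (n + 1) ^ (-1 + (1 : ℝ) / (n + 1))) / Real.log n}.Infinite := by
  have h := infinite_setOf_lt_add_of_not_summable logDivRoot_nonneg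
    (fun n => (one_div_pos.mpr (p_pos n)).le) not_summable_one_div_p
  exact (h.sdiff (Set.finite_Iio 2)).mono fun n hn =>
    firoozbakht_inequality_of_logDivRoot_lt (not_lt.mp hn.2) hn.1
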